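/- There exist M > 0 and a constant C₃ > 0 such that for all x ≥ M and all y ≥ 0, with μ = (0, −2x, −2y), one has |1 − 4x z₂(μ)| ≤ C₃ / x. -/

import Mathlib

open Real Filter

/-- Integral of a function over the unit sphere `S² ⊂ ℝ³` with respect to the
surface measure, written in spherical coordinates
`m = (sin θ cos φ, sin θ sin φ, cos θ)` with surface element `sin θ dφ dθ`. -/
noncomputable def sphereIntegral (f : (Fin 3 → ℝ) → ℝ) : ℝ :=
  ∫ θ in (0:ℝ)..Real.pi, ∫ φ in (0:ℝ)..(2 * Real.pi),
    f ![Real.sin θ * Real.cos φ, Real.sin θ * Real.sin φ, Real.cos θ] * Real.sin θ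

/-- The Bingham normalizing constant
`Z(μ) = (1/(4π)) ∫_{S²} exp(μ₁ m₁² + μ₂ m₂² + μ₃ m₃²) dσ(m)`. -/
noncomputable def binghamZ (μ : Fin 3 → ℝ) : ℝ :=
  (1 / (4 * Real.pi)) * sphereIntegral (fun m => Real.exp (∑ i, μ i * (m i) ^ 2))

/-- The second moments of the Bingham distribution:
`zᵢ(μ) = (1/(4π Z(μ))) ∫_{S²} mᵢ² exp(μ₁ m₁² + μ₂ m₂² + μ₃ m₃²) dσ(m)`. -/
noncomputable def binghamZ2 (μ : Fin 3 → ℝ) (i : Fin 3) : ℝ :=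
  (1 / (4 * Real.pi * binghamZ μ)) *
    sphereIntegral (fun m => (m i) ^ 2 * Real.exp (∑ j, μ j * (m j) ^ 2))

/-!
Integrating by parts on the sphere along the tangent field `e₂ - m₂ m` gives
`∫ (1 - 4x m₂²) E = ∫ m₂² (3 - 4x m₂² - 4y m₃²) E` for `E = exp (-2x m₂² - 2y m₃²)`, so
`1 - 4x z₂` is the ratio of this integral to `∫ E`. As `t (3 + 4t) e⁻ᵗ` is bounded,
`x m₂² |3 - 4x m₂² - 4y m₃²| E ≤ 11 exp (-x m₂² - y m₃²)`. Finally `∫ exp (-a m₂² - b m₃²)` is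
comparable to `1 / √((1 + a)(1 + b))` (a Gaussian bound from above, a window around `e₁` from
below), so doubling `(x, y)` changes it by at most a constant factor.
-/

open MeasureTheory Set Function

section IteratedIntegral

variable {f g : ℝ → ℝ → ℝ} {a b c d : ℝ}

lemma intervalIntegral_intervalIntegral_add (hf : Continuous (uncurry f))
    (hg : Continuous (uncurry g)) :
    ∫ x in a..b, ∫ y in c..d, (f x y + g x y) =
      (∫ x in a..b, ∫ y in c..d, f x y) + ∫ x in a..b, ∫ y in c..d, g x y := by
  rw [← intervalIntegral.integral_add
    ((by fun_prop : Continuous fun x => ∫ y in c..d, f x y).intervalIntegrable _ _)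
    ((by fun_prop : Continuous fun x => ∫ y in c..d, g x y).intervalIntegrable _ _)]
  refine intervalIntegral.integral_congr fun x _ => ?_
  exact intervalIntegral.integral_add ((by fun_prop : Continuous (f x)).intervalIntegrable _ _)
    ((by fun_prop : Continuous (g x)).intervalIntegrable _ _)

lemma intervalIntegral_intervalIntegral_mono (hab : a ≤ b) (hcd : c ≤ d)
    (hf : Continuous (uncurry f)) (hg : Continuous (uncurry g))
    (h : ∀ x ∈ Icc a b, ∀ y ∈ Icc c d, f x y ≤ g x y) :
    ∫ x in a..b, ∫ y in c..d, f x y ≤ ∫ x in a..b, ∫ y in c..d, g x y :=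
  intervalIntegral.integral_mono_on hab
    ((by fun_prop : Continuous fun x => ∫ y in c..d, f x y).intervalIntegrable _ _)
    ((by fun_prop : Continuous fun x => ∫ y in c..d, g x y).intervalIntegrable _ _) fun x hx =>
      intervalIntegral.integral_mono_on hcd
        ((by fun_prop : Continuous (f x)).intervalIntegrable _ _)
        ((by fun_prop : Continuous (g x)).intervalIntegrable _ _) (h x hx)

theorem intervalIntegral_intervalIntegral_deriv_add_deriv_eq_zero {P Q P' Q' : ℝ → ℝ → ℝ}
    (hP : ∀ x y, HasDerivAt (P · y) (P' x y) x) (hQ : ∀ x y, HasDerivAt (Q x ·) (Q' x y) y)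
    (hP' : Continuous (uncurry P')) (hQ' : Continuous (uncurry Q'))
    (hPab : ∀ y, P a y = P b y) (hQcd : ∀ x, Q x c = Q x d) :
    ∫ x in a..b, ∫ y in c..d, (P' x y + Q' x y) = 0 := by
  have hswap : ∫ x in a..b, ∫ y in c..d, P' x y = ∫ y in c..d, ∫ x in a..b, P' x y :=
    intervalIntegral_intervalIntegral_swap <|
      (hP'.continuousOn.integrableOn_compact (isCompact_uIcc.prod isCompact_uIcc)).mono_set
        (prod_mono uIoc_subset_uIcc uIoc_subset_uIcc)
  have hPint (y : ℝ) : ∫ x in a..b, P' x y = 0 := by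
    rw [intervalIntegral.integral_eq_sub_of_hasDerivAt (fun x _ => hP x y)
      ((by fun_prop : Continuous (P' · y)).intervalIntegrable _ _), hPab, sub_self]
  have hQint (x : ℝ) : ∫ y in c..d, Q' x y = 0 := by
    rw [intervalIntegral.integral_eq_sub_of_hasDerivAt (fun y _ => hQ x y)
      ((by fun_prop : Continuous (Q' x)).intervalIntegrable _ _), hQcd, sub_self]
  simp [intervalIntegral_intervalIntegral_add hP' hQ', hswap, hPint, hQint]

lemma mul_sub_le_intervalIntegral {f : ℝ → ℝ} {m : ℝ} (hac : a ≤ c) (hcd : c ≤ d) (hdb : d ≤ b)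
    (hf : Continuous f) (hf₀ : ∀ x ∈ Icc a b, 0 ≤ f x) (hm : ∀ x ∈ Icc c d, m ≤ f x) :
    m * (d - c) ≤ ∫ x in a..b, f x :=
  calc m * (d - c) = ∫ _ in c..d, m := by simp [mul_comm]
    _ ≤ ∫ x in c..d, f x :=
      intervalIntegral.integral_mono_on hcd intervalIntegrable_const (hf.intervalIntegrable _ _) hm
    _ ≤ ∫ x in a..b, f x :=
      intervalIntegral.integral_mono_interval hac hcd hdb
        ((ae_restrict_iff' measurableSet_Ioc).2 <|
          .of_forall fun x hx => hf₀ x (Ioc_subset_Icc_self hx))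
        (hf.intervalIntegrable _ _)

end IteratedIntegral

section SphereIntegral

variable {F G : (Fin 3 → ℝ) → ℝ}

lemma sphereIntegral_add (hF : Continuous F) (hG : Continuous G) :
    sphereIntegral (fun m => F m + G m) = sphereIntegral F + sphereIntegral G := by
  unfold sphereIntegral
  simp_rw [add_mul]
  exact intervalIntegral_intervalIntegral_add (by unfold uncurry; fun_prop)
    (by unfold uncurry; fun_prop)

lemma sphereIntegral_const_mul (r : ℝ) (F : (Fin 3 → ℝ) → ℝ) :
    sphereIntegral (fun m => r * F m) = r * sphereIntegral F := by
  unfold sphereIntegral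
  simp_rw [mul_assoc, intervalIntegral.integral_const_mul]

lemma sphereIntegral_mono (hF : Continuous F) (hG : Continuous G) (h : ∀ m, F m ≤ G m) :
    sphereIntegral F ≤ sphereIntegral G :=
  intervalIntegral_intervalIntegral_mono pi_nonneg (by positivity) (by unfold uncurry; fun_prop)
    (by unfold uncurry; fun_prop) fun _ hθ _ _ =>
      mul_le_mul_of_nonneg_right (h _) (sin_nonneg_of_nonneg_of_le_pi hθ.1 hθ.2)

lemma abs_sphereIntegral_le (hF : Continuous F) (hG : Continuous G) (h : ∀ m, |F m| ≤ G m) :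
    |sphereIntegral F| ≤ sphereIntegral G := by
  have hneg : sphereIntegral (fun m => -F m) = -sphereIntegral F := by
    simpa using sphereIntegral_const_mul (-1) F
  rw [abs_le, neg_le, ← hneg]
  exact ⟨sphereIntegral_mono hF.neg hG fun m => (neg_le.1 (neg_abs_le _)).trans (h m),
    sphereIntegral_mono hF hG fun m => le_of_abs_le (h m)⟩

end SphereIntegral

noncomputable def binghamExponent (μ : Fin 3 → ℝ) (θ φ : ℝ) : ℝ :=
  μ 0 * (sin θ * cos φ) ^ 2 + μ 1 * (sin θ * sin φ) ^ 2 + μ 2 * cos θ ^ 2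

section BinghamExponent

variable (μ : Fin 3 → ℝ) (θ φ : ℝ)

lemma sum_mul_sq_eq_binghamExponent :
    ∑ j, μ j * ![sin θ * cos φ, sin θ * sin φ, cos θ] j ^ 2 = binghamExponent μ θ φ := by
  simp [Fin.sum_univ_three, binghamExponent]

lemma hasDerivAt_binghamExponent_left :
    HasDerivAt (binghamExponent μ · φ)
      (2 * sin θ * cos θ * (μ 0 * cos φ ^ 2 + μ 1 * sin φ ^ 2 - μ 2)) θ := by
  have h₀ := (((hasDerivAt_sin θ).mul_const (cos φ)).fun_pow 2).const_mul (μ 0)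
  have h₁ := (((hasDerivAt_sin θ).mul_const (sin φ)).fun_pow 2).const_mul (μ 1)
  have h₂ := ((hasDerivAt_cos θ).fun_pow 2).const_mul (μ 2)
  exact ((h₀.add h₁).add h₂).congr_deriv (by push_cast; ring)

lemma hasDerivAt_binghamExponent_right :
    HasDerivAt (binghamExponent μ θ ·) (2 * sin θ ^ 2 * sin φ * cos φ * (μ 1 - μ 0)) φ := by
  have h₀ := (((hasDerivAt_cos φ).const_mul (sin θ)).fun_pow 2).const_mul (μ 0)
  have h₁ := (((hasDerivAt_sin φ).const_mul (sin θ)).fun_pow 2).const_mul (μ 1)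
  exact ((h₀.add h₁).add_const (μ 2 * cos θ ^ 2)).congr_deriv (by push_cast; ring)

end BinghamExponent

/-- Integration by parts along the tangent field `e₂ - m₂ m`: in coordinates the difference of
the integrands is `∂θ P + ∂φ Q` for `P = sin²θ cos θ sin²φ eᵘ` and `Q = sin θ sin φ cos φ eᵘ`. -/
theorem sphereIntegral_one_add_two_mul_sq_mul_exp (μ : Fin 3 → ℝ) :
    sphereIntegral (fun m => (1 + 2 * μ 1 * m 1 ^ 2) * exp (∑ j, μ j * m j ^ 2)) =
      sphereIntegral fun m =>
        m 1 ^ 2 * (3 + 2 * ∑ j, μ j * m j ^ 2) * exp (∑ j, μ j * m j ^ 2) := by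
  have hcont : Continuous fun p : ℝ × ℝ => binghamExponent μ p.1 p.2 := by
    unfold binghamExponent; fun_prop
  have hP (θ φ : ℝ) :
      HasDerivAt (fun θ => sin θ ^ 2 * cos θ * sin φ ^ 2 * exp (binghamExponent μ θ φ))
        (((2 * sin θ * cos θ ^ 2 - sin θ ^ 3) * sin φ ^ 2 + sin θ ^ 2 * cos θ * sin φ ^ 2 *
          (2 * sin θ * cos θ * (μ 0 * cos φ ^ 2 + μ 1 * sin φ ^ 2 - μ 2))) *
            exp (binghamExponent μ θ φ)) θ :=
    ((((hasDerivAt_sin θ).fun_pow 2).fun_mul (hasDerivAt_cos θ)).mul_const _ |>.fun_mul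
      (hasDerivAt_binghamExponent_left μ θ φ).exp).congr_deriv (by push_cast; ring)
  have hQ (θ φ : ℝ) :
      HasDerivAt (fun φ => sin θ * sin φ * cos φ * exp (binghamExponent μ θ φ))
        ((sin θ * (cos φ ^ 2 - sin φ ^ 2) + sin θ * sin φ * cos φ *
          (2 * sin θ ^ 2 * sin φ * cos φ * (μ 1 - μ 0))) * exp (binghamExponent μ θ φ)) φ :=
    ((((hasDerivAt_sin φ).const_mul (sin θ)).fun_mul (hasDerivAt_cos φ)).fun_mul
      (hasDerivAt_binghamExponent_right μ θ φ).exp).congr_deriv (by ring)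
  have hdiv := intervalIntegral_intervalIntegral_deriv_add_deriv_eq_zero (a := 0) (b := π)
    (c := 0) (d := 2 * π) hP hQ (by unfold uncurry; fun_prop) (by unfold uncurry; fun_prop)
    (fun φ => by simp) (fun θ => by simp [binghamExponent])
  rw [← sub_eq_zero, ← hdiv, sub_eq_iff_eq_add']
  unfold sphereIntegral
  rw [← intervalIntegral_intervalIntegral_add]
  rotate_left
  · unfold uncurry; simp only [sum_mul_sq_eq_binghamExponent]; fun_prop
  · unfold uncurry; fun_prop
  refine intervalIntegral.integral_congr fun θ _ => intervalIntegral.integral_congr fun φ _ => ?_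
  simp only [sum_mul_sq_eq_binghamExponent, Matrix.cons_val_one, Matrix.cons_val_zero]
  generalize exp (binghamExponent μ θ φ) = E
  simp only [binghamExponent]
  linear_combination E * sin θ * (-(2 * μ 0 * sin θ ^ 2 * sin φ ^ 2 * cos φ ^ 2)
      - 2 * μ 1 * sin θ ^ 2 * sin φ ^ 4 - 2 * sin φ ^ 2) * sin_sq_add_cos_sq θ
    + E * sin θ * (-(2 * μ 1 * sin θ ^ 2 * sin φ ^ 2) - 1) * sin_sq_add_cos_sq φ

lemma binghamZ2_eq_div (μ : Fin 3 → ℝ) (i : Fin 3) :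
    binghamZ2 μ i = sphereIntegral (fun m => m i ^ 2 * exp (∑ j, μ j * m j ^ 2)) /
      sphereIntegral (fun m => exp (∑ j, μ j * m j ^ 2)) := by
  rw [binghamZ2, binghamZ, ← mul_assoc, mul_one_div_cancel (by positivity), one_mul, one_div,
    div_eq_inv_mul]

lemma one_add_two_mul_binghamZ2 (μ : Fin 3 → ℝ)
    (hZ : sphereIntegral (fun m => exp (∑ j, μ j * m j ^ 2)) ≠ 0) :
    1 + 2 * μ 1 * binghamZ2 μ 1 =
      sphereIntegral (fun m =>
          m 1 ^ 2 * (3 + 2 * ∑ j, μ j * m j ^ 2) * exp (∑ j, μ j * m j ^ 2)) /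
        sphereIntegral (fun m => exp (∑ j, μ j * m j ^ 2)) := by
  rw [← sphereIntegral_one_add_two_mul_sq_mul_exp, binghamZ2_eq_div]
  simp_rw [add_mul, one_mul, mul_assoc (2 * μ 1)]
  rw [sphereIntegral_add (by fun_prop) (by fun_prop), sphereIntegral_const_mul]
  field_simp

lemma sq_div_four_le_sin_sq {θ : ℝ} (hθ : |θ| ≤ π / 2) : θ ^ 2 / 4 ≤ sin θ ^ 2 := by
  have key (t : ℝ) (ht₀ : 0 ≤ t) (ht : t ≤ π / 2) : t ^ 2 / 4 ≤ sin t ^ 2 := by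
    have hjordan := mul_le_sin ht₀ ht
    have hπ : t / 2 ≤ 2 / π * t := by
      rw [div_eq_mul_inv t, mul_comm t]
      gcongr
      rw [le_div_iff₀ pi_pos]
      linarith [pi_le_four]
    nlinarith
  rcases abs_le.1 hθ with ⟨h₁, h₂⟩
  rcases le_total 0 θ with h | h
  · exact key θ h h₂
  · simpa using key (-θ) (by linarith) (by linarith)

lemma integral_exp_neg_mul_sin_sq_le {b : ℝ} (hb : 0 ≤ b) :
    ∫ θ in -(π / 2)..π / 2, exp (-(b * sin θ ^ 2)) ≤ 2 * exp 1 * √π / √(1 + b) := by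
  -- Jordan gives `b sin² θ ≥ b θ² / 4`; the factor `e` pays for an extra `θ² / 4 ≤ 1`.
  have hpt : ∀ θ ∈ Icc (-(π / 2)) (π / 2),
      exp (-(b * sin θ ^ 2)) ≤ exp 1 * exp (-((1 + b) / 4) * θ ^ 2) := by
    intro θ hθ
    have hθ' : |θ| ≤ π / 2 := abs_le.2 hθ
    have hsin := sq_div_four_le_sin_sq hθ'
    have hθ4 : θ ^ 2 / 4 ≤ 1 := by
      have : θ ^ 2 ≤ (π / 2) ^ 2 := sq_le_sq' (abs_le.1 hθ').1 (abs_le.1 hθ').2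
      nlinarith [pi_le_four, pi_pos]
    rw [← exp_add, exp_le_exp]
    nlinarith [mul_le_mul_of_nonneg_left hsin hb]
  have hgauss : Integrable fun θ : ℝ => exp 1 * exp (-((1 + b) / 4) * θ ^ 2) :=
    (integrable_exp_neg_mul_sq (by linarith)).const_mul _
  calc ∫ θ in -(π / 2)..π / 2, exp (-(b * sin θ ^ 2))
      ≤ ∫ θ in -(π / 2)..π / 2, exp 1 * exp (-((1 + b) / 4) * θ ^ 2) :=
        intervalIntegral.integral_mono_on (by linarith [pi_pos])
          ((by fun_prop : Continuous _).intervalIntegrable _ _) hgauss.intervalIntegrable hpt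
    _ ≤ ∫ θ, exp 1 * exp (-((1 + b) / 4) * θ ^ 2) := by
        rw [intervalIntegral.integral_of_le (by linarith [pi_pos])]
        exact setIntegral_le_integral hgauss (.of_forall fun _ => by positivity)
    _ = 2 * exp 1 * √π / √(1 + b) := by
        rw [integral_const_mul, integral_gaussian, div_div_eq_mul_div, sqrt_div' _ (by linarith),
          sqrt_mul' _ (by norm_num), show √4 = 2 by rw [show (4 : ℝ) = 2 ^ 2 by norm_num,
          sqrt_sq (by norm_num)]]
        ring

lemma periodic_exp_neg_mul_sin_sq (b : ℝ) : Periodic (fun φ => exp (-(b * sin φ ^ 2))) π :=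
  fun φ => by simp [sin_add_pi]

lemma integral_exp_neg_mul_sin_sq_zero_two_pi (b : ℝ) :
    ∫ φ in (0)..2 * π, exp (-(b * sin φ ^ 2)) =
      2 * ∫ θ in -(π / 2)..π / 2, exp (-(b * sin θ ^ 2)) := by
  have hper := periodic_exp_neg_mul_sin_sq b
  have hcont : Continuous fun φ => exp (-(b * sin φ ^ 2)) := by fun_prop
  rw [← intervalIntegral.integral_add_adjacent_intervals (b := π) (hcont.intervalIntegrable _ _)
    (hcont.intervalIntegrable _ _), two_mul π, two_mul]
  nth_rewrite 1 [← zero_add π]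
  rw [hper.intervalIntegral_add_eq 0 (-(π / 2)), hper.intervalIntegral_add_eq π (-(π / 2)),
    neg_add_eq_sub, sub_half]

lemma integral_exp_neg_mul_cos_sq (b : ℝ) :
    ∫ θ in (0)..π, exp (-(b * cos θ ^ 2)) = ∫ θ in -(π / 2)..π / 2, exp (-(b * sin θ ^ 2)) := by
  have hper := periodic_exp_neg_mul_sin_sq b
  simp_rw [← sin_add_pi_div_two]
  rw [intervalIntegral.integral_comp_add_right (fun θ => exp (-(b * sin θ ^ 2))), zero_add,
    add_comm π, hper.intervalIntegral_add_eq (π / 2) (-(π / 2)), neg_add_eq_sub, sub_half]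

noncomputable def gaussianSphereIntegral (a b : ℝ) : ℝ :=
  sphereIntegral fun m => exp (-(a * m 1 ^ 2 + b * m 2 ^ 2))

lemma gaussianSphereIntegral_eq (a b : ℝ) :
    gaussianSphereIntegral a b = ∫ θ in (0)..π, ∫ φ in (0)..2 * π,
      exp (-(a * (sin θ * sin φ) ^ 2 + b * cos θ ^ 2)) * sin θ := rfl

lemma mul_integral_exp_neg_mul_sin_sq_le {a s : ℝ} (ha : 0 ≤ a) (hs₀ : 0 ≤ s) (hs₁ : s ≤ 1) :
    s * ∫ φ in (0)..2 * π, exp (-(a * s ^ 2 * sin φ ^ 2)) ≤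
      2 * (2 * exp 1 * √π) / √(1 + a) := by
  have hs : s * √(1 + a) ≤ √(1 + a * s ^ 2) :=
    calc s * √(1 + a) = √(s ^ 2 * (1 + a)) := by rw [sqrt_mul (sq_nonneg _), sqrt_sq hs₀]
      _ ≤ √(1 + a * s ^ 2) :=
        sqrt_le_sqrt (by nlinarith [mul_le_mul_of_nonneg_left (mul_le_one₀ hs₁ hs₀ hs₁) ha])
  rw [integral_exp_neg_mul_sin_sq_zero_two_pi]
  calc s * (2 * ∫ θ in -(π / 2)..π / 2, exp (-(a * s ^ 2 * sin θ ^ 2)))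
      ≤ s * (2 * (2 * exp 1 * √π / √(1 + a * s ^ 2))) := by
        gcongr; exact integral_exp_neg_mul_sin_sq_le (by positivity)
    _ = 2 * (2 * exp 1 * √π) * (s / √(1 + a * s ^ 2)) := by ring
    _ ≤ 2 * (2 * exp 1 * √π) * (1 / √(1 + a)) := by
        refine mul_le_mul_of_nonneg_left ?_ (by positivity)
        rwa [div_le_div_iff₀ (by positivity) (by positivity), one_mul]
    _ = 2 * (2 * exp 1 * √π) / √(1 + a) := by ring

theorem gaussianSphereIntegral_le {a b : ℝ} (ha : 0 ≤ a) (hb : 0 ≤ b) :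
    gaussianSphereIntegral a b ≤ 2 * (2 * exp 1 * √π) ^ 2 / (√(1 + a) * √(1 + b)) := by
  set K := 2 * exp 1 * √π
  have hsplit (θ φ : ℝ) : exp (-(a * (sin θ * sin φ) ^ 2 + b * cos θ ^ 2)) * sin θ =
      exp (-(b * cos θ ^ 2)) * (sin θ * exp (-(a * sin θ ^ 2 * sin φ ^ 2))) := by
    rw [show -(a * (sin θ * sin φ) ^ 2 + b * cos θ ^ 2) =
      -(b * cos θ ^ 2) + -(a * sin θ ^ 2 * sin φ ^ 2) by ring, exp_add]
    ring
  calc gaussianSphereIntegral a b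
      = ∫ θ in (0)..π, exp (-(b * cos θ ^ 2)) *
          (sin θ * ∫ φ in (0)..2 * π, exp (-(a * sin θ ^ 2 * sin φ ^ 2))) := by
        simp_rw [gaussianSphereIntegral_eq, hsplit, intervalIntegral.integral_const_mul]
    _ ≤ ∫ θ in (0)..π, exp (-(b * cos θ ^ 2)) * (2 * K / √(1 + a)) := by
        refine intervalIntegral.integral_mono_on pi_nonneg
          ((by fun_prop : Continuous _).intervalIntegrable _ _)
          ((by fun_prop : Continuous _).intervalIntegrable _ _) fun θ hθ => ?_
        gcongr
        exact mul_integral_exp_neg_mul_sin_sq_le ha (sin_nonneg_of_nonneg_of_le_pi hθ.1 hθ.2)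
          (sin_le_one θ)
    _ ≤ K / √(1 + b) * (2 * K / √(1 + a)) := by
        rw [intervalIntegral.integral_mul_const, integral_exp_neg_mul_cos_sq]
        gcongr
        exact integral_exp_neg_mul_sin_sq_le hb
    _ = 2 * K ^ 2 / (√(1 + a) * √(1 + b)) := by ring

lemma exp_neg_two_div_two_le {a b θ φ : ℝ} (ha : 0 ≤ a) (hb : 0 ≤ b)
    (hθ : (π / 2 - θ) ^ 2 * (1 + b) ≤ 1) (hφ : φ ^ 2 * (1 + a) ≤ 1) :
    exp (-2) / 2 ≤ exp (-(a * (sin θ * sin φ) ^ 2 + b * cos θ ^ 2)) * sin θ := by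
  have hm₁ : a * (sin θ * sin φ) ^ 2 ≤ 1 := by
    have := mul_le_mul (sin_sq_le_one θ) (sin_sq_le_sq (x := φ)) (sq_nonneg _) zero_le_one
    nlinarith [mul_le_mul_of_nonneg_left this ha]
  have hm₂ : b * cos θ ^ 2 ≤ 1 := by
    rw [← sin_pi_div_two_sub]
    nlinarith [mul_le_mul_of_nonneg_left (sin_sq_le_sq (x := π / 2 - θ)) hb]
  have hsin : 1 / 2 ≤ sin θ := by
    rw [← cos_pi_div_two_sub]
    nlinarith [one_sub_sq_div_two_le_cos (x := π / 2 - θ), mul_nonneg (sq_nonneg (π / 2 - θ)) hb]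
  rw [div_eq_mul_one_div]
  gcongr
  linarith

theorem le_gaussianSphereIntegral {a b : ℝ} (ha : 0 ≤ a) (hb : 0 ≤ b) :
    exp (-2) / 2 / (√(1 + a) * √(1 + b)) ≤ gaussianSphereIntegral a b := by
  set ε := 1 / √(1 + a)
  set δ := 1 / √(1 + b)
  have hε : ε ^ 2 * (1 + a) = 1 := by rw [div_pow, sq_sqrt (by linarith)]; field_simp
  have hδ : δ ^ 2 * (1 + b) = 1 := by rw [div_pow, sq_sqrt (by linarith)]; field_simp
  have hδ₀ : 0 ≤ δ := by positivity
  have hε₁ : ε ≤ 1 := div_le_one_of_le₀ (one_le_sqrt.2 (by linarith)) (sqrt_nonneg _)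
  have hδ₁ : δ ≤ 1 := div_le_one_of_le₀ (one_le_sqrt.2 (by linarith)) (sqrt_nonneg _)
  have hf₀ : ∀ θ ∈ Icc 0 π, ∀ φ : ℝ,
      0 ≤ exp (-(a * (sin θ * sin φ) ^ 2 + b * cos θ ^ 2)) * sin θ :=
    fun θ hθ _ => mul_nonneg (exp_nonneg _) (sin_nonneg_of_nonneg_of_le_pi hθ.1 hθ.2)
  have hinner : ∀ θ ∈ Icc (π / 2 - δ) (π / 2), exp (-2) / 2 * (ε - 0) ≤
      ∫ φ in (0)..2 * π, exp (-(a * (sin θ * sin φ) ^ 2 + b * cos θ ^ 2)) * sin θ := by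
    intro θ hθ
    refine mul_sub_le_intervalIntegral le_rfl (by positivity) (by linarith [pi_gt_three])
      (by fun_prop)
      (fun φ _ => hf₀ θ ⟨by linarith [hθ.1, pi_gt_three], by linarith [hθ.2, pi_pos]⟩ φ)
      fun φ hφ => exp_neg_two_div_two_le ha hb ?_ ?_
    · calc (π / 2 - θ) ^ 2 * (1 + b) ≤ δ ^ 2 * (1 + b) := by gcongr <;> linarith [hθ.1, hθ.2]
        _ = 1 := hδ
    · calc φ ^ 2 * (1 + a) ≤ ε ^ 2 * (1 + a) := by gcongr <;> linarith [hφ.1, hφ.2]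
        _ = 1 := hε
  calc exp (-2) / 2 / (√(1 + a) * √(1 + b))
      = exp (-2) / 2 * (ε - 0) * (π / 2 - (π / 2 - δ)) := by simp only [ε, δ]; field_simp; ring
    _ ≤ gaussianSphereIntegral a b :=
      mul_sub_le_intervalIntegral (by linarith [pi_gt_three]) (by linarith) (by linarith [pi_pos])
        (by fun_prop)
        (fun θ hθ => intervalIntegral.integral_nonneg (by positivity) fun φ _ => hf₀ θ hθ φ)
        hinner

theorem gaussianSphereIntegral_le_mul {a b : ℝ} (ha : 0 ≤ a) (hb : 0 ≤ b) :
    gaussianSphereIntegral a b ≤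
      8 * exp 2 * (2 * exp 1 * √π) ^ 2 * gaussianSphereIntegral (2 * a) (2 * b) := by
  set K := 2 * exp 1 * √π
  have hdouble : √(1 + 2 * a) * √(1 + 2 * b) ≤ 2 * (√(1 + a) * √(1 + b)) :=
    calc √(1 + 2 * a) * √(1 + 2 * b) = √((1 + 2 * a) * (1 + 2 * b)) :=
          (sqrt_mul (by linarith) _).symm
      _ ≤ √(2 ^ 2 * ((1 + a) * (1 + b))) := sqrt_le_sqrt (by nlinarith)
      _ = 2 * (√(1 + a) * √(1 + b)) := by
          rw [sqrt_mul (by positivity), sqrt_sq (by norm_num), sqrt_mul (by linarith)]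
  calc gaussianSphereIntegral a b ≤ 2 * K ^ 2 / (√(1 + a) * √(1 + b)) :=
        gaussianSphereIntegral_le ha hb
    _ = 8 * exp 2 * K ^ 2 * (exp (-2) / 2 / (2 * (√(1 + a) * √(1 + b)))) := by
        rw [exp_neg]; field_simp; ring
    _ ≤ 8 * exp 2 * K ^ 2 * (exp (-2) / 2 / (√(1 + 2 * a) * √(1 + 2 * b))) := by gcongr
    _ ≤ 8 * exp 2 * K ^ 2 * gaussianSphereIntegral (2 * a) (2 * b) := by
        gcongr
        exact le_gaussianSphereIntegral (by linarith) (by linarith)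

lemma sphereIntegral_exp_eq_gaussianSphereIntegral (a b : ℝ) :
    sphereIntegral (fun m => exp (∑ j, ![0, -2 * a, -2 * b] j * m j ^ 2)) =
      gaussianSphereIntegral (2 * a) (2 * b) := by
  simp only [gaussianSphereIntegral, Fin.sum_univ_three, Matrix.cons_val_zero,
    Matrix.cons_val_one, Matrix.cons_val_two, Matrix.head_cons, Matrix.tail_cons, zero_mul,
    zero_add, neg_mul, neg_add]

lemma one_sub_four_mul_binghamZ2 {x y : ℝ} (h : gaussianSphereIntegral (2 * x) (2 * y) ≠ 0) :
    1 - 4 * x * binghamZ2 ![0, -2 * x, -2 * y] 1 =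
      sphereIntegral (fun m => m 1 ^ 2 * (3 + 2 * ∑ j, ![0, -2 * x, -2 * y] j * m j ^ 2) *
          exp (∑ j, ![0, -2 * x, -2 * y] j * m j ^ 2)) /
        gaussianSphereIntegral (2 * x) (2 * y) := by
  rw [← sphereIntegral_exp_eq_gaussianSphereIntegral] at h ⊢
  rw [← one_add_two_mul_binghamZ2 _ h, show ![0, -2 * x, -2 * y] 1 = -2 * x from rfl]
  ring

lemma mul_abs_three_sub_four_mul_le_exp {A T : ℝ} (hA : 0 ≤ A) (hAT : A ≤ T) :
    A * |3 - 4 * T| ≤ 11 * exp T := by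
  have hT : 0 ≤ T := hA.trans hAT
  calc A * |3 - 4 * T| ≤ T * (3 + 4 * T) :=
        mul_le_mul hAT (abs_le.2 ⟨by linarith, by linarith⟩) (abs_nonneg _) hT
    _ ≤ 11 * exp T := by nlinarith [quadratic_le_exp_of_nonneg hT]

lemma abs_sq_mul_three_add_mul_exp_le {x y : ℝ} (hx : 0 < x) (hy : 0 ≤ y) (m : Fin 3 → ℝ) :
    |m 1 ^ 2 * (3 + 2 * ∑ j, ![0, -2 * x, -2 * y] j * m j ^ 2) *
        exp (∑ j, ![0, -2 * x, -2 * y] j * m j ^ 2)| ≤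
      11 / x * exp (-(x * m 1 ^ 2 + y * m 2 ^ 2)) := by
  set T := x * m 1 ^ 2 + y * m 2 ^ 2
  have hsum : ∑ j, ![0, -2 * x, -2 * y] j * m j ^ 2 = -2 * T := by
    simp [Fin.sum_univ_three, T]; ring
  have hbound := mul_abs_three_sub_four_mul_le_exp (by positivity : 0 ≤ x * m 1 ^ 2)
    (le_add_of_nonneg_right (by positivity) : x * m 1 ^ 2 ≤ T)
  rw [hsum, abs_mul, abs_mul, abs_of_nonneg (exp_nonneg _), abs_of_nonneg (sq_nonneg _)]
  calc m 1 ^ 2 * |3 + 2 * (-2 * T)| * exp (-2 * T)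
      = x * m 1 ^ 2 * |3 - 4 * T| * exp (-2 * T) / x := by field_simp; ring_nf
    _ ≤ 11 * exp T * exp (-2 * T) / x := by gcongr
    _ = 11 / x * exp (-T) := by rw [mul_assoc, ← exp_add]; ring_nf

/-- There exist `M > 0` and `C₃ > 0` such that for all `x ≥ M` and `y ≥ 0`,
with `μ = (0, −2x, −2y)`, one has `|1 − 4x z₂(μ)| ≤ C₃ / x`. -/
theorem one_sub_four_x_z2_bound :
    ∃ M : ℝ, 0 < M ∧ ∃ C₃ : ℝ, 0 < C₃ ∧
      ∀ x : ℝ, M ≤ x → ∀ y : ℝ, 0 ≤ y →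
        |1 - 4 * x * binghamZ2 ![0, -2 * x, -2 * y] 1| ≤ C₃ / x := by
  set R := 8 * exp 2 * (2 * exp 1 * √π) ^ 2
  refine ⟨1, one_pos, 11 * R, by positivity, fun x hx y hy => ?_⟩
  have hx₀ : 0 < x := one_pos.trans_le hx
  set G := gaussianSphereIntegral (2 * x) (2 * y)
  have hG : 0 < G :=
    (by positivity : 0 < exp (-2) / 2 / (√(1 + 2 * x) * √(1 + 2 * y))).trans_le
      (le_gaussianSphereIntegral (by positivity) (by positivity))
  rw [one_sub_four_mul_binghamZ2 hG.ne', abs_div, abs_of_pos hG]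
  calc _ ≤ 11 / x * gaussianSphereIntegral x y / G := by
        gcongr
        exact (abs_sphereIntegral_le (by fun_prop) (by fun_prop)
          (abs_sq_mul_three_add_mul_exp_le hx₀ hy)).trans_eq (sphereIntegral_const_mul _ _)
    _ ≤ 11 / x * (R * G) / G := by
        gcongr
        exact gaussianSphereIntegral_le_mul hx₀.le hy
    _ = 11 * R / x := by rw [mul_div_assoc, mul_div_cancel_right₀ _ hG.ne']; ring
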